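/- Let G be a group acting by isometries on a metric space X with basepoint x₀, and suppose the orbit map g ↦ g x₀ is a quasi-isometry between (G, d_S) for a word metric d_S and X. If an element φ ∈ G is K-strongly contracting as an isometry of X (its orbit {φⁱx₀} is a K-strongly contracting K-quasigeodesic in X), then φ is weakly contracting in (G, d_S) by means of X: there exists K' > 0 such that for all g ∈ G with d_S(g, {φⁱ}) > K', the projection by means of X of the d_S-ball of radius d_S(g,{φⁱ})/K' centered at g has diameter (measured in X) at most K'. -/

import Mathlib

/-- The word norm of `g` with respect to a generating set `S`. -/
noncomputable def wordNorm {G : Type*} [Group G] (S : Set G) (g : G) : ℕ :=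
  sInf {n : ℕ | ∃ l : List G, l.length = n ∧ (∀ x ∈ l, x ∈ S ∨ x⁻¹ ∈ S) ∧ l.prod = g}

/-- The word metric on `G` associated to `S`, as a real-valued distance. -/
noncomputable def wordDist {G : Type*} [Group G] (S : Set G) (g h : G) : ℝ :=
  (wordNorm S (g⁻¹ * h) : ℝ)

/-- The set of nearest-point projections of `x` onto the subset `A`. -/
def projSet {X : Type*} [MetricSpace X] (A : Set X) (x : X) : Set X :=
  {p ∈ A | dist x p = Metric.infDist x A}

/-- A subset `A` of `X` is `K`-strongly contracting. -/
def StronglyContractingSet {X : Type*} [MetricSpace X] (K : ℝ) (A : Set X) : Prop :=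
  ∀ x : X, Metric.infDist x A > K →
    Metric.diam (⋃ b ∈ Metric.ball x (Metric.infDist x A), projSet A b) ≤ K

/-- If the orbit map `g ↦ g • x₀` is a quasi-isometry from `(G, d_S)` to `X` and `φ ∈ G` is a
`K`-strongly contracting isometry of `X` (its orbit is a `K`-strongly contracting
`K`-quasigeodesic), then `φ` is weakly contracting in `(G, d_S)` by means of `X`: there is
`K' > 0` such that whenever `d_S(g, {φⁱ}) > K'`, the projection (by means of `X`) of the
`d_S`-ball of radius `d_S(g,{φⁱ})/K'` about `g` has diameter at most `K'` in `X`. -/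
theorem weakly_contracting_of_strongly_contracting
    {G : Type*} [Group G] {X : Type*} [MetricSpace X] [MulAction G X]
    (hiso : ∀ g : G, Isometry (fun x : X => g • x))
    (S : Set G) (hSfin : S.Finite) (hSgen : Subgroup.closure S = ⊤)
    (x₀ : X) (C : ℝ) (hC : 1 ≤ C)
    (hQI : ∀ g h : G,
      (1 / C) * wordDist S g h - C ≤ dist (g • x₀) (h • x₀) ∧
      dist (g • x₀) (h • x₀) ≤ C * wordDist S g h + C)
    (φ : G) (K : ℝ) (hK : 0 < K)
    (hQG : ∀ i j : ℤ,
      (1 / K) * |(i : ℝ) - (j : ℝ)| - K ≤ dist ((φ ^ i) • x₀) ((φ ^ j) • x₀) ∧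
      dist ((φ ^ i) • x₀) ((φ ^ j) • x₀) ≤ K * |(i : ℝ) - (j : ℝ)| + K)
    (hSC : StronglyContractingSet K (Set.range fun i : ℤ => (φ ^ i) • x₀)) :
    ∃ K' : ℝ, 0 < K' ∧ ∀ g : G,
      (⨅ i : ℤ, wordDist S g (φ ^ i)) > K' →
      Metric.diam (⋃ h ∈ {h : G | wordDist S g h ≤ (⨅ i : ℤ, wordDist S g (φ ^ i)) / K'},
        projSet (Set.range fun i : ℤ => (φ ^ i) • x₀) (h • x₀)) ≤ K' := by
  have hCpos : (0 : ℝ) < C := lt_of_lt_of_le one_pos hC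
  have hK'pos : (0 : ℝ) < 4 * C ^ 2 + C * K + C := by nlinarith
  refine ⟨4 * C ^ 2 + C * K + C, hK'pos, ?_⟩
  intro g hg
  set A := (Set.range fun i : ℤ => (φ ^ i) • x₀) with hA
  set D := ⨅ i : ℤ, wordDist S g (φ ^ i) with hDdef
  set K' := 4 * C ^ 2 + C * K + C with hK'
  have hAne : A.Nonempty := ⟨(φ ^ (0 : ℤ)) • x₀, ⟨0, rfl⟩⟩
  have hwd_nonneg : ∀ h : G, 0 ≤ wordDist S g h := fun h => Nat.cast_nonneg _
  have hbdd : BddBelow (Set.range fun i : ℤ => wordDist S g (φ ^ i)) :=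
    ⟨0, by rintro x ⟨i, rfl⟩; exact hwd_nonneg _⟩
  have hDle : ∀ i : ℤ, D ≤ wordDist S g (φ ^ i) := fun i => ciInf_le hbdd i
  set r := Metric.infDist (g • x₀) A with hrdef
  -- lower bound on r
  have hr : (1 / C) * D - C ≤ r := by
    by_contra hlt
    push_neg at hlt
    obtain ⟨y, hy, hd⟩ := (Metric.infDist_lt_iff hAne).mp hlt
    obtain ⟨i, rfl⟩ := hy
    have h1 := (hQI g (φ ^ i)).1
    have h2 := hDle i
    have h3 : (1 / C) * D ≤ (1 / C) * wordDist S g (φ ^ i) :=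
      mul_le_mul_of_nonneg_left h2 (by positivity)
    simp only at hd h1
    linarith
  have hr' : D ≤ C * r + C ^ 2 := by
    have := mul_le_mul_of_nonneg_left hr hCpos.le
    have hc : C * ((1 / C) * D - C) = D - C ^ 2 := by field_simp
    rw [hc] at this
    linarith
  have hrK : K < r := by nlinarith
  have hdiam := hSC (g • x₀) hrK
  -- boundedness of the big union
  have hBsub : (⋃ b ∈ Metric.ball (g • x₀) r, projSet A b) ⊆
      Metric.closedBall (g • x₀) (3 * r) := by
    intro p hp
    simp only [Set.mem_iUnion, exists_prop] at hp
    obtain ⟨b, hb, hpA, hdist⟩ := hp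
    rw [Metric.mem_ball] at hb
    have h2 : Metric.infDist b A ≤ Metric.infDist (g • x₀) A + dist b (g • x₀) :=
      Metric.infDist_le_infDist_add_dist
    rw [← hrdef] at h2
    rw [Metric.mem_closedBall, dist_comm]
    calc dist (g • x₀) p ≤ dist (g • x₀) b + dist b p := dist_triangle _ _ _
      _ = dist (g • x₀) b + Metric.infDist b A := by rw [hdist]
      _ ≤ r + (r + r) := by rw [dist_comm]; linarith
      _ = 3 * r := by ring
  have hBdd : Bornology.IsBounded (⋃ b ∈ Metric.ball (g • x₀) r, projSet A b) :=
    Metric.isBounded_closedBall.subset hBsub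
  -- main estimate
  apply Metric.diam_le_of_forall_dist_le (by positivity)
  intro p hp q hq
  simp only [Set.mem_iUnion, exists_prop, Set.mem_setOf_eq] at hp hq
  obtain ⟨h₁, hh₁, hp₁⟩ := hp
  obtain ⟨h₂, hh₂, hq₂⟩ := hq
  have ht1 : 1 < D / K' := (one_lt_div hK'pos).mpr hg
  have htK : D / K' * K' = D := div_mul_cancel₀ D hK'pos.ne'
  have hball : ∀ h : G, wordDist S g h ≤ D / K' → h • x₀ ∈ Metric.ball (g • x₀) r := by
    intro h hh
    rw [Metric.mem_ball, dist_comm]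
    have h1 := (hQI g h).2
    have h2 : C * wordDist S g h + C ≤ C * (D / K') + C := by
      have := mul_le_mul_of_nonneg_left hh hCpos.le
      linarith
    have h3 : C * (D / K') + C < r := by nlinarith [hwd_nonneg h]
    linarith
  have hpU : p ∈ ⋃ b ∈ Metric.ball (g • x₀) r, projSet A b :=
    Set.mem_biUnion (hball h₁ hh₁) hp₁
  have hqU : q ∈ ⋃ b ∈ Metric.ball (g • x₀) r, projSet A b :=
    Set.mem_biUnion (hball h₂ hh₂) hq₂
  have := Metric.dist_le_diam_of_mem hBdd hpU hqU
  nlinarith
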